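/- Let d ≥ 1, h > 0, and let θ₀, θ₁, θ₂ satisfy condition C1 or condition C2. Define Q*(r) = (exp(−‖r‖²/(2h²)) / (h√(2π))^{d}) · [ θ₀ − (θ₁/h²)(‖r‖²/h² − d) + (θ₂/h⁴)(‖r‖⁴/h⁴ − 2(d+2)‖r‖²/h² + d(d+2)) ] for r ∈ ℝᵈ. Then for every N ∈ ℕ, every choice of points s₁, …, s_N ∈ ℝᵈ and every vector x ∈ ℝᴺ, the quadratic form Σ_{n=1}^{N} Σ_{m=1}^{N} xₙ x_m Q*(sₙ − s_m) is nonnegative; that is, the N × N precision matrix with entries Q*(sₙ − s_m) is positive semidefinite. -/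

import Mathlib

/-- The explicit SPH-LAP2 precision function equipped with the Gaussian
smoothing kernel of bandwidth `h`. -/
noncomputable def QstarGauss (d : ℕ) (h θ₀ θ₁ θ₂ : ℝ)
    (r : EuclideanSpace ℝ (Fin d)) : ℝ :=
  (Real.exp (-‖r‖ ^ 2 / (2 * h ^ 2)) / (h * Real.sqrt (2 * Real.pi)) ^ d) *
    (θ₀ - (θ₁ / h ^ 2) * (‖r‖ ^ 2 / h ^ 2 - d)
      + (θ₂ / h ^ 4) * (‖r‖ ^ 4 / h ^ 4 - 2 * ((d : ℝ) + 2) * ‖r‖ ^ 2 / h ^ 2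
          + d * ((d : ℝ) + 2)))

/-!
Bochner's easy direction: if `f r = ∫ S k e^{i⟪r, k⟫} dk` with `S ≥ 0` integrable, then
`∑ₙ ∑ₘ xₙ xₘ f (sₙ - sₘ) = ∫ S k |∑ₙ xₙ e^{i⟪sₙ, k⟫}|² dk ≥ 0`.
Here `S k = (2π)^{-d} e^{-h²‖k‖²/2} (θ₀ + θ₁‖k‖² + θ₂‖k‖⁴)`, whose polynomial factor is
nonnegative under C1 or C2 (under C2 its discriminant in `‖k‖²` is negative). That `Q*` is the
inverse Fourier transform of `S` reduces to the moments `∫ ‖k‖^{2j} e^{-b‖k‖² + i⟪w, k⟫} dk`,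
`j ≤ 2`. Differentiating the `j`-th moment in `b` gives minus the `(j+1)`-st, so they are
obtained by differentiating the Gaussian Fourier transform `(π/b)^{d/2} e^{-‖w‖²/(4b)}` once and
twice in `b`.
-/

open MeasureTheory Complex
open scoped Real RealInnerProductSpace ComplexConjugate Nat

section PositiveDefinite

variable {ι V : Type*} [Fintype ι] [NormedAddCommGroup V] [InnerProductSpace ℝ V]
  [MeasurableSpace V] [BorelSpace V]

theorem sum_sum_mul_cexp_sub_eq_normSq (x a : ι → ℝ) :
    ∑ n, ∑ m, (x n * x m : ℂ) * cexp (I * (a n - a m)) =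
      normSq (∑ n, x n * cexp (I * a n)) := by
  rw [← mul_conj, map_sum, Finset.sum_mul_sum]
  refine Finset.sum_congr rfl fun n _ => Finset.sum_congr rfl fun m _ => ?_
  rw [map_mul, conj_ofReal, ← exp_conj, map_mul, conj_I, conj_ofReal, mul_sub, exp_sub,
    neg_mul, exp_neg]
  ring

theorem sum_sum_mul_nonneg_of_eq_integral_cexp_inner {μ : Measure V} {S : V → ℝ}
    (hS : Integrable S μ) (hS_nonneg : ∀ k, 0 ≤ S k) {f : V → ℝ}
    (hf : ∀ r, (f r : ℂ) = ∫ k, S k * cexp (I * ⟪r, k⟫) ∂μ) (s : ι → V) (x : ι → ℝ) :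
    0 ≤ ∑ n, ∑ m, x n * x m * f (s n - s m) := by
  have hintegrable : ∀ r, Integrable (fun k => (S k : ℂ) * cexp (I * ⟪r, k⟫)) μ := fun r =>
    hS.ofReal.mul_bdd (by fun_prop) <| ae_of_all _ fun k => by
      rw [mul_comm]; exact (norm_exp_ofReal_mul_I _).le
  suffices h : ∑ n, ∑ m, x n * x m * f (s n - s m) =
      ∫ k, S k * normSq (∑ n, x n * cexp (I * ⟪s n, k⟫)) ∂μ by
    rw [h]; exact integral_nonneg fun k => mul_nonneg (hS_nonneg k) (normSq_nonneg _)
  apply ofReal_injective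
  simp_rw [ofReal_sum, ofReal_mul, hf, ← integral_const_mul]
  rw [← integral_complex_ofReal]
  have hterm : ∀ n m,
      Integrable (fun k => (x n * x m : ℂ) * (S k * cexp (I * ⟪s n - s m, k⟫))) μ :=
    fun n m => (hintegrable _).const_mul _
  simp_rw [← integral_finsetSum _ fun m _ => hterm _ m]
  rw [← integral_finsetSum _ fun n _ => integrable_finsetSum _ fun m _ => hterm n m]
  congr 1 with k
  simp_rw [ofReal_mul, ← sum_sum_mul_cexp_sub_eq_normSq, Finset.mul_sum, inner_sub_left,
    ofReal_sub]
  congr! 2; ring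

end PositiveDefinite

lemma Real.pow_mul_exp_neg_mul_le {b x : ℝ} (hb : 0 < b) (hx : 0 ≤ x) (j : ℕ) :
    x ^ j * Real.exp (-b * x) ≤ j ! * (2 / b) ^ j * Real.exp (-(b / 2) * x) := by
  have h := Real.pow_div_factorial_le_exp _ (mul_nonneg (half_pos hb).le hx) j
  rw [div_le_iff₀ (by positivity), mul_pow] at h
  have hsplit : Real.exp (-b * x) = Real.exp (-(b / 2) * x) * Real.exp (-(b / 2) * x) := by
    rw [← Real.exp_add]; ring_nf
  have hcancel : (2 / b) ^ j * (b / 2) ^ j = 1 := by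
    rw [← mul_pow, div_mul_div_comm, mul_comm 2 b, div_self (by positivity), one_pow]
  calc x ^ j * Real.exp (-b * x)
      = (2 / b) ^ j * ((b / 2) ^ j * x ^ j) * Real.exp (-(b / 2) * x) *
          Real.exp (-(b / 2) * x) := by
        rw [hsplit, ← mul_assoc ((2 / b) ^ j), hcancel]; ring
    _ ≤ (2 / b) ^ j * (Real.exp (b / 2 * x) * j !) * Real.exp (-(b / 2) * x) *
          Real.exp (-(b / 2) * x) := by gcongr
    _ = j ! * (2 / b) ^ j * Real.exp (-(b / 2) * x) := by
        have hexp : Real.exp (b / 2 * x) * Real.exp (-(b / 2) * x) = 1 := by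
          rw [← Real.exp_add]; simp
        linear_combination ((2 / b) ^ j * j ! * Real.exp (-(b / 2) * x)) * hexp

lemma norm_cexp_neg_mul_sq_add_I_mul (b t c : ℝ) :
    ‖cexp (-b * t ^ 2 + I * c)‖ = Real.exp (-b * t ^ 2) := by
  rw [norm_exp]; congr 1; simp [← ofReal_pow]

noncomputable def gaussianFourierClosedForm (n : ℕ) (A b : ℝ) : ℝ :=
  (π / b) ^ ((n : ℝ) / 2) * Real.exp (-(A / b))

lemma hasDerivAt_gaussianFourierClosedForm (n : ℕ) (A : ℝ) {b : ℝ} (hb : 0 < b) :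
    HasDerivAt (gaussianFourierClosedForm n A)
      (gaussianFourierClosedForm n A b * -(n / 2 * b⁻¹ - A * (b ^ 2)⁻¹)) b := by
  have hπb : 0 < π / b := div_pos Real.pi_pos hb
  have hdiv : HasDerivAt (fun β : ℝ => π / β) (-(π / b ^ 2)) b := by
    simpa [div_eq_mul_inv] using (hasDerivAt_inv hb.ne').const_mul π
  have hexp : HasDerivAt (fun β : ℝ => -(A / β)) (A * (b ^ 2)⁻¹) b := by
    simpa [div_eq_mul_inv, mul_comm] using (hasDerivAt_inv hb.ne').const_mul (-A)
  refine (((Real.hasDerivAt_rpow_const (Or.inl hπb.ne')).comp b hdiv).mul hexp.exp).congr_deriv ?_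
  rw [gaussianFourierClosedForm, Function.comp_apply, Real.rpow_sub hπb, Real.rpow_one]
  field_simp
  ring

lemma gaussianFourierClosedForm_half_sq (n : ℕ) (A : ℝ) {h : ℝ} (hh : 0 < h) :
    gaussianFourierClosedForm n A (h ^ 2 / 2) =
      (√(2 * π) / h) ^ n * Real.exp (-(2 * A / h ^ 2)) := by
  rw [gaussianFourierClosedForm, Real.rpow_div_two_eq_sqrt _ (by positivity), Real.rpow_natCast,
    show π / (h ^ 2 / 2) = 2 * π / h ^ 2 by field_simp, Real.sqrt_div' _ (sq_nonneg h),
    Real.sqrt_sq hh.le]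
  congr 2
  field_simp

section GaussianMoments

variable {V : Type*} [NormedAddCommGroup V] [InnerProductSpace ℝ V] [FiniteDimensional ℝ V]
  [MeasurableSpace V] [BorelSpace V]

lemma integrable_norm_pow_mul_exp_neg_mul_sq {b : ℝ} (hb : 0 < b) (j : ℕ) :
    Integrable fun k : V => ‖k‖ ^ (2 * j) * Real.exp (-b * ‖k‖ ^ 2) := by
  have hgauss : Integrable fun k : V => Real.exp (-(b / 2) * ‖k‖ ^ 2) :=
    Integrable.of_integral_ne_zero <| by
      rw [GaussianFourier.integral_rexp_neg_mul_sq_norm (half_pos hb)]; positivity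
  refine (hgauss.const_mul (j ! * (2 / b) ^ j)).mono' (by fun_prop) (ae_of_all _ fun k => ?_)
  rw [Real.norm_of_nonneg (by positivity), pow_mul]
  exact Real.pow_mul_exp_neg_mul_le hb (sq_nonneg _) j

lemma integrable_norm_pow_mul_cexp_neg_mul_sq_add {b : ℝ} (hb : 0 < b) (j : ℕ) (w : V) :
    Integrable fun k : V => (‖k‖ : ℂ) ^ (2 * j) * cexp (-b * ‖k‖ ^ 2 + I * ⟪w, k⟫) := by
  refine (integrable_norm_pow_mul_exp_neg_mul_sq hb j).mono' (by fun_prop) (ae_of_all _ fun k => ?_)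
  rw [norm_mul, norm_cexp_neg_mul_sq_add_I_mul, norm_pow, norm_real, norm_norm]

noncomputable def gaussianMoment (w : V) (j : ℕ) (b : ℝ) : ℂ :=
  ∫ k : V, (‖k‖ : ℂ) ^ (2 * j) * cexp (-b * ‖k‖ ^ 2 + I * ⟪w, k⟫)

lemma hasDerivAt_norm_pow_mul_cexp_neg_mul_sq_add (j : ℕ) (t c β : ℝ) :
    HasDerivAt (fun β : ℝ => (t : ℂ) ^ (2 * j) * cexp (-β * t ^ 2 + I * c))
      (-((t : ℂ) ^ (2 * (j + 1)) * cexp (-β * t ^ 2 + I * c))) β := by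
  have h : HasDerivAt (fun z : ℂ => -z * t ^ 2 + I * c) (-(t : ℂ) ^ 2) β := by
    simpa using ((hasDerivAt_id (β : ℂ)).neg.mul_const ((t : ℂ) ^ 2)).add_const (I * c)
  convert (h.cexp.const_mul ((t : ℂ) ^ (2 * j))).comp_ofReal using 1
  ring

lemma hasDerivAt_gaussianMoment (w : V) (j : ℕ) {b : ℝ} (hb : 0 < b) :
    HasDerivAt (gaussianMoment w j) (-gaussianMoment w (j + 1) b) b := by
  rw [gaussianMoment, ← integral_neg]
  refine (hasDerivAt_integral_of_dominated_loc_of_deriv_le (Metric.ball_mem_nhds b (half_pos hb))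
    (.of_forall fun β => by fun_prop) (integrable_norm_pow_mul_cexp_neg_mul_sq_add hb j w)
    (by fun_prop) (ae_of_all _ fun k β hβ => ?_)
    (integrable_norm_pow_mul_exp_neg_mul_sq (half_pos hb) (j + 1))
    (ae_of_all _ fun k β _ => hasDerivAt_norm_pow_mul_cexp_neg_mul_sq_add j ‖k‖ ⟪w, k⟫ β)).2
  have hβ : b / 2 ≤ β := by
    rw [Metric.mem_ball, Real.dist_eq, abs_lt] at hβ; linarith
  rw [norm_neg, norm_mul, norm_cexp_neg_mul_sq_add_I_mul, norm_pow, norm_real, norm_norm]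
  gcongr

lemma gaussianMoment_zero (w : V) {b : ℝ} (hb : 0 < b) :
    gaussianMoment w 0 b = gaussianFourierClosedForm (Module.finrank ℝ V) (‖w‖ ^ 2 / 4) b := by
  have h := GaussianFourier.integral_cexp_neg_mul_sq_norm_add
    (show 0 < (b : ℂ).re from hb) I w
  simp only [gaussianMoment, mul_zero, pow_zero, one_mul, h, gaussianFourierClosedForm,
    ofReal_mul, ofReal_exp]
  rw [← ofReal_div, ofReal_cpow (div_pos Real.pi_pos hb).le, I_sq]
  push_cast
  ring_nf

lemma gaussianMoment_succ_eq_neg_deriv {w : V} {j : ℕ} {F : ℝ → ℝ} {b F' : ℝ} (hb : 0 < b)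
    (hF : ∀ β, 0 < β → gaussianMoment w j β = F β) (hF' : HasDerivAt F F' b) :
    gaussianMoment w (j + 1) b = -F' := by
  have hev : gaussianMoment w j =ᶠ[nhds b] fun β => (F β : ℂ) :=
    Filter.eventually_of_mem (Ioi_mem_nhds hb) hF
  have h := (hasDerivAt_gaussianMoment w j hb).unique (hF'.ofReal_comp.congr_of_eventuallyEq hev)
  rw [← h, neg_neg]

lemma gaussianMoment_one (w : V) {b : ℝ} (hb : 0 < b) :
    gaussianMoment w 1 b = ((gaussianFourierClosedForm (Module.finrank ℝ V) (‖w‖ ^ 2 / 4) b *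
      (Module.finrank ℝ V / 2 * b⁻¹ - ‖w‖ ^ 2 / 4 * (b ^ 2)⁻¹) : ℝ) : ℂ) := by
  rw [gaussianMoment_succ_eq_neg_deriv hb (fun β hβ => gaussianMoment_zero w hβ)
    (hasDerivAt_gaussianFourierClosedForm _ _ hb)]
  push_cast
  ring

lemma gaussianMoment_two (w : V) {b : ℝ} (hb : 0 < b) :
    gaussianMoment w 2 b = ((gaussianFourierClosedForm (Module.finrank ℝ V) (‖w‖ ^ 2 / 4) b *
      ((Module.finrank ℝ V / 2 * b⁻¹ - ‖w‖ ^ 2 / 4 * (b ^ 2)⁻¹) ^ 2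
        + Module.finrank ℝ V / 2 * (b ^ 2)⁻¹ - 2 * (‖w‖ ^ 2 / 4) * (b ^ 3)⁻¹) : ℝ) : ℂ) := by
  set n := Module.finrank ℝ V
  set A := ‖w‖ ^ 2 / 4
  have hp : HasDerivAt (fun β : ℝ => n / 2 * β⁻¹ - A * (β ^ 2)⁻¹)
      (n / 2 * -(b ^ 2)⁻¹ - A * (-(2 * b ^ 1) / (b ^ 2) ^ 2)) b :=
    ((hasDerivAt_inv hb.ne').const_mul _).sub
      (((hasDerivAt_pow 2 b).inv (pow_ne_zero 2 hb.ne')).const_mul A)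
  rw [gaussianMoment_succ_eq_neg_deriv (F := fun β => gaussianFourierClosedForm n A β *
      (n / 2 * β⁻¹ - A * (β ^ 2)⁻¹)) hb (fun β hβ => gaussianMoment_one w hβ)
    ((hasDerivAt_gaussianFourierClosedForm n A hb).mul hp)]
  push_cast
  field_simp
  ring

end GaussianMoments

noncomputable def sphLap2GaussSpectralDensity (d : ℕ) (h θ₀ θ₁ θ₂ : ℝ)
    (k : EuclideanSpace ℝ (Fin d)) : ℝ :=
  ((2 * π) ^ d)⁻¹ * (Real.exp (-(h ^ 2 / 2) * ‖k‖ ^ 2) * (θ₀ + θ₁ * ‖k‖ ^ 2 + θ₂ * ‖k‖ ^ 4))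

theorem QstarGauss_eq_integral (d : ℕ) {h : ℝ} (hh : 0 < h) (θ₀ θ₁ θ₂ : ℝ)
    (w : EuclideanSpace ℝ (Fin d)) :
    (QstarGauss d h θ₀ θ₁ θ₂ w : ℂ) =
      ∫ k, (sphLap2GaussSpectralDensity d h θ₀ θ₁ θ₂ k : ℂ) * cexp (I * ⟪w, k⟫) := by
  have hb : 0 < h ^ 2 / 2 := by positivity
  have hm := fun j => integrable_norm_pow_mul_cexp_neg_mul_sq_add hb j w
  have h0 := gaussianMoment_zero w hb
  have h1 := gaussianMoment_one w hb
  have h2 := gaussianMoment_two w hb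
  simp only [gaussianMoment, finrank_euclideanSpace_fin] at h0 h1 h2
  have hintegrand : ∀ k : EuclideanSpace ℝ (Fin d),
      (sphLap2GaussSpectralDensity d h θ₀ θ₁ θ₂ k : ℂ) * cexp (I * ⟪w, k⟫) =
        (((2 * π) ^ d)⁻¹ : ℝ) *
          (θ₀ * ((‖k‖ : ℂ) ^ (2 * 0) * cexp (-(h ^ 2 / 2 : ℝ) * ‖k‖ ^ 2 + I * ⟪w, k⟫))
          + θ₁ * ((‖k‖ : ℂ) ^ (2 * 1) * cexp (-(h ^ 2 / 2 : ℝ) * ‖k‖ ^ 2 + I * ⟪w, k⟫))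
          + θ₂ * ((‖k‖ : ℂ) ^ (2 * 2) * cexp (-(h ^ 2 / 2 : ℝ) * ‖k‖ ^ 2 + I * ⟪w, k⟫))) := by
    intro k
    simp only [sphLap2GaussSpectralDensity, exp_add, ofReal_mul, ofReal_exp]
    push_cast
    ring
  rw [integral_congr_ae (ae_of_all _ hintegrand), integral_const_mul,
    integral_add ?_ ((hm 2).const_mul _), integral_add ((hm 0).const_mul _) ((hm 1).const_mul _),
    integral_const_mul, integral_const_mul, integral_const_mul, h0, h1, h2,
    gaussianFourierClosedForm_half_sq d _ hh]
  · norm_cast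
    have hsqrt : (2 * π) ^ d = √(2 * π) ^ d * √(2 * π) ^ d := by
      rw [← mul_pow, Real.mul_self_sqrt (by positivity)]
    rw [QstarGauss, show -(2 * (‖w‖ ^ 2 / 4) / h ^ 2) = -‖w‖ ^ 2 / (2 * h ^ 2) by ring,
      hsqrt, div_pow, mul_pow]
    field_simp
    ring
  · exact ((hm 0).const_mul _).add ((hm 1).const_mul _)

lemma integrable_sphLap2GaussSpectralDensity (d : ℕ) {h : ℝ} (hh : 0 < h) (θ₀ θ₁ θ₂ : ℝ) :
    Integrable (sphLap2GaussSpectralDensity d h θ₀ θ₁ θ₂) := by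
  have hm := fun j => integrable_norm_pow_mul_exp_neg_mul_sq (V := EuclideanSpace ℝ (Fin d))
    (show 0 < h ^ 2 / 2 by positivity) j
  refine ((((hm 0).const_mul θ₀).add ((hm 1).const_mul θ₁)).add
    ((hm 2).const_mul θ₂)).const_mul ((2 * π) ^ d)⁻¹ |>.congr (ae_of_all _ fun k => ?_)
  simp only [sphLap2GaussSpectralDensity, Pi.add_apply]
  ring

def SphLap2Admissible (θ₀ θ₁ θ₂ : ℝ) : Prop :=
  (0 < θ₀ ∧ 0 < θ₁ ∧ 0 < θ₂) ∨ (0 < θ₀ ∧ 0 < θ₂ ∧ θ₁ < 0 ∧ θ₁ ^ 2 < 4 * θ₀ * θ₂)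

lemma SphLap2Admissible.quadratic_nonneg {θ₀ θ₁ θ₂ : ℝ} (hθ : SphLap2Admissible θ₀ θ₁ θ₂)
    {t : ℝ} (ht : 0 ≤ t) : 0 ≤ θ₀ + θ₁ * t + θ₂ * t ^ 2 := by
  rcases hθ with ⟨h₀, h₁, h₂⟩ | ⟨h₀, h₂, -, hdisc⟩
  · positivity
  · nlinarith [sq_nonneg (2 * θ₂ * t + θ₁)]

lemma sphLap2GaussSpectralDensity_nonneg (d : ℕ) (h : ℝ) {θ₀ θ₁ θ₂ : ℝ}
    (hθ : SphLap2Admissible θ₀ θ₁ θ₂) (k : EuclideanSpace ℝ (Fin d)) :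
    0 ≤ sphLap2GaussSpectralDensity d h θ₀ θ₁ θ₂ k := by
  have hpoly : 0 ≤ θ₀ + θ₁ * ‖k‖ ^ 2 + θ₂ * ‖k‖ ^ 4 := by
    simpa [← pow_mul] using hθ.quadratic_nonneg (sq_nonneg ‖k‖)
  unfold sphLap2GaussSpectralDensity
  positivity

theorem sph_lap2_gaussian_precision_psd_general (d : ℕ) (h : ℝ) (hh : 0 < h)
    (θ₀ θ₁ θ₂ : ℝ)
    (hC : (0 < θ₀ ∧ 0 < θ₁ ∧ 0 < θ₂) ∨
          (0 < θ₀ ∧ 0 < θ₂ ∧ θ₁ < 0 ∧ θ₁ ^ 2 < 4 * θ₀ * θ₂))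
    (N : ℕ) (s : Fin N → EuclideanSpace ℝ (Fin d)) (x : Fin N → ℝ) :
    0 ≤ ∑ n : Fin N, ∑ m : Fin N, x n * x m * QstarGauss d h θ₀ θ₁ θ₂ (s n - s m) :=
  sum_sum_mul_nonneg_of_eq_integral_cexp_inner
    (integrable_sphLap2GaussSpectralDensity d hh θ₀ θ₁ θ₂)
    (sphLap2GaussSpectralDensity_nonneg d h hC) (QstarGauss_eq_integral d hh θ₀ θ₁ θ₂) s x

/-- Under condition C1 or C2 on `(θ₀, θ₁, θ₂)`, the Gaussian
SPH-LAP2 precision function `Q*` yields, at any finite point configuration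
`s₁,…,s_N` and for any real weights `x`, a nonnegative quadratic form
`Σₙ Σₘ xₙ xₘ Q*(sₙ − sₘ) ≥ 0`; i.e. the precision matrix `(Q*(sₙ − sₘ))` is
positive semidefinite. -/
theorem sph_lap2_gaussian_precision_psd (d : ℕ) (hd : 1 ≤ d) (h : ℝ) (hh : 0 < h)
    (θ₀ θ₁ θ₂ : ℝ)
    (hC : (0 < θ₀ ∧ 0 < θ₁ ∧ 0 < θ₂) ∨
          (0 < θ₀ ∧ 0 < θ₂ ∧ θ₁ < 0 ∧ θ₁ ^ 2 < 4 * θ₀ * θ₂))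
    (N : ℕ) (s : Fin N → EuclideanSpace ℝ (Fin d)) (x : Fin N → ℝ) :
    0 ≤ ∑ n : Fin N, ∑ m : Fin N, x n * x m * QstarGauss d h θ₀ θ₁ θ₂ (s n - s m) :=
  sph_lap2_gaussian_precision_psd_general d h hh θ₀ θ₁ θ₂ hC N s x
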